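/- With the hexagon data of the counterexample, any 1-Lipschitz candidate value {S1,S2} at the origin forces S1 and S2 to lie strictly on opposite sides of each of the three perpendicular bisectors of the segments P1P4, P2P5, P3P6 — i.e., if G({S1,S2}, f(X)) < 1 for all X ∈ {A,B,C}, then for each of the three lines y=0, y=√3 x, y=-√3 x, the points S1 and S2 lie in different open half-planes. -/

import Mathlib

/-! `P4, P5, P6` are `-P1, -P2, -P3`, and `P1, P2, P3` are unit vectors. Since
`‖x - Q‖² = ‖x‖² - 2⟪x, Q⟫ + ‖Q‖²`, the open ball of radius `‖Q‖` about `Q` lies in the open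
half-plane `⟪·, Q⟫ > 0`. A Wasserstein distance `< 1` from `{Q, -Q}` puts `S1`, `S2` within
distance `1` of `Q`, `-Q` in some order, so `⟪S1, Q⟫` and `⟪S2, Q⟫` have strictly opposite signs,
and `⟪·, Q⟫ = 0` is the perpendicular bisector of `Q` and `-Q`. -/

noncomputable def Gdist
    (p q : EuclideanSpace ℝ (Fin 2) × EuclideanSpace ℝ (Fin 2)) : ℝ :=
  min (Real.sqrt (‖p.1 - q.1‖ ^ 2 + ‖p.2 - q.2‖ ^ 2))
      (Real.sqrt (‖p.1 - q.2‖ ^ 2 + ‖p.2 - q.1‖ ^ 2))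

noncomputable def P1 : EuclideanSpace ℝ (Fin 2) := !₂[0, 1]
noncomputable def P2 : EuclideanSpace ℝ (Fin 2) := !₂[Real.sqrt 3 / 2, 1 / 2]
noncomputable def P3 : EuclideanSpace ℝ (Fin 2) := !₂[Real.sqrt 3 / 2, -(1 / 2)]
noncomputable def P4 : EuclideanSpace ℝ (Fin 2) := !₂[0, -1]
noncomputable def P5 : EuclideanSpace ℝ (Fin 2) := !₂[-(Real.sqrt 3 / 2), -(1 / 2)]
noncomputable def P6 : EuclideanSpace ℝ (Fin 2) := !₂[-(Real.sqrt 3 / 2), 1 / 2]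

open RealInnerProductSpace

theorem inner_pos_of_norm_sub_lt_norm {E : Type*} [NormedAddCommGroup E] [InnerProductSpace ℝ E]
    {x p : E} (h : ‖x - p‖ < ‖p‖) : 0 < ⟪x, p⟫ := by
  have hsq : ‖x - p‖ ^ 2 < ‖p‖ ^ 2 := by gcongr
  rw [norm_sub_sq_real] at hsq
  nlinarith [sq_nonneg ‖x‖]

theorem norm_sub_lt_of_Gdist_lt {S₁ S₂ Q₁ Q₂ : EuclideanSpace ℝ (Fin 2)} {r : ℝ}
    (h : Gdist (S₁, S₂) (Q₁, Q₂) < r) :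
    (‖S₁ - Q₁‖ < r ∧ ‖S₂ - Q₂‖ < r) ∨ (‖S₁ - Q₂‖ < r ∧ ‖S₂ - Q₁‖ < r) := by
  have norm_lt_of_sqrt_lt : ∀ a b : EuclideanSpace ℝ (Fin 2), √(‖a‖ ^ 2 + ‖b‖ ^ 2) < r → ‖a‖ < r ∧ ‖b‖ < r :=
    fun a b hab => ⟨(Real.le_sqrt_of_sq_le (by nlinarith [sq_nonneg ‖b‖])).trans_lt hab,
      (Real.le_sqrt_of_sq_le (by nlinarith [sq_nonneg ‖a‖])).trans_lt hab⟩
  rcases min_lt_iff.mp h with h | h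
  · exact .inl (norm_lt_of_sqrt_lt _ _ h)
  · exact .inr (norm_lt_of_sqrt_lt _ _ h)

theorem inner_opposite_signs_of_Gdist_lt {S₁ S₂ Q : EuclideanSpace ℝ (Fin 2)}
    (h : Gdist (S₁, S₂) (Q, -Q) < ‖Q‖) :
    (0 < ⟪S₁, Q⟫ ∧ ⟪S₂, Q⟫ < 0) ∨ (⟪S₁, Q⟫ < 0 ∧ 0 < ⟪S₂, Q⟫) := by
  have neg_side : ∀ {S}, ‖S - -Q‖ < ‖Q‖ → ⟪S, Q⟫ < 0 := fun hS => by
    rw [← norm_neg Q] at hS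
    simpa [inner_neg_right] using inner_pos_of_norm_sub_lt_norm hS
  rcases norm_sub_lt_of_Gdist_lt h with ⟨h₁, h₂⟩ | ⟨h₁, h₂⟩
  · exact .inl ⟨inner_pos_of_norm_sub_lt_norm h₁, neg_side h₂⟩
  · exact .inr ⟨neg_side h₁, inner_pos_of_norm_sub_lt_norm h₂⟩

theorem P4_eq_neg_P1 : P4 = -P1 := by ext i; fin_cases i <;> simp [P1, P4]

theorem P5_eq_neg_P2 : P5 = -P2 := by ext i; fin_cases i <;> simp [P2, P5]

theorem P6_eq_neg_P3 : P6 = -P3 := by ext i; fin_cases i <;> simp [P3, P6]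

theorem norm_P1 : ‖P1‖ = 1 := by
  norm_num [EuclideanSpace.norm_eq, P1]

theorem norm_P2 : ‖P2‖ = 1 := by
  norm_num [EuclideanSpace.norm_eq, P2, div_pow]

theorem norm_P3 : ‖P3‖ = 1 := by
  norm_num [EuclideanSpace.norm_eq, P3, div_pow]

theorem inner_P1 (S : EuclideanSpace ℝ (Fin 2)) : ⟪S, P1⟫ = S 1 := by
  simp [PiLp.inner_apply, Fin.sum_univ_two, P1]

theorem inner_P2 (S : EuclideanSpace ℝ (Fin 2)) : ⟪S, P2⟫ = (√3 * S 0 + S 1) / 2 := by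
  simp only [P2, PiLp.inner_apply, RCLike.inner_apply, Real.ringHom_apply, Fin.sum_univ_two,
    Matrix.cons_val_zero, Matrix.cons_val_one, Matrix.cons_val_fin_one]
  ring

theorem inner_P3 (S : EuclideanSpace ℝ (Fin 2)) : ⟪S, P3⟫ = (√3 * S 0 - S 1) / 2 := by
  simp only [P3, PiLp.inner_apply, RCLike.inner_apply, Real.ringHom_apply, Fin.sum_univ_two,
    Matrix.cons_val_zero, Matrix.cons_val_one, Matrix.cons_val_fin_one]
  ring

/-- If the value {S1,S2} at the origin is at Wasserstein distance < 1 from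
each of f(A)={P1,P4}, f(B)={P2,P5}, f(C)={P3,P6}, then S1 and S2 lie strictly
on opposite sides of each of the lines y = 0, y = √3x, y = -√3x (the
perpendicular bisectors of P1P4, P2P5, P3P6). -/
theorem candidate_value_opposite_sectors
    (S1 S2 : EuclideanSpace ℝ (Fin 2))
    (hA : Gdist (S1, S2) (P1, P4) < 1)
    (hB : Gdist (S1, S2) (P2, P5) < 1)
    (hC : Gdist (S1, S2) (P3, P6) < 1) :
    ((0 < S1 1 ∧ S2 1 < 0) ∨ (S1 1 < 0 ∧ 0 < S2 1)) ∧
    ((Real.sqrt 3 * S1 0 < S1 1 ∧ S2 1 < Real.sqrt 3 * S2 0) ∨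
      (S1 1 < Real.sqrt 3 * S1 0 ∧ Real.sqrt 3 * S2 0 < S2 1)) ∧
    ((-(Real.sqrt 3) * S1 0 < S1 1 ∧ S2 1 < -(Real.sqrt 3) * S2 0) ∨
      (S1 1 < -(Real.sqrt 3) * S1 0 ∧ -(Real.sqrt 3) * S2 0 < S2 1)) := by
  rw [P4_eq_neg_P1, ← norm_P1] at hA
  rw [P5_eq_neg_P2, ← norm_P2] at hB
  rw [P6_eq_neg_P3, ← norm_P3] at hC
  have h₁ := inner_opposite_signs_of_Gdist_lt hA
  have h₂ := inner_opposite_signs_of_Gdist_lt hB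
  have h₃ := inner_opposite_signs_of_Gdist_lt hC
  simp only [inner_P1, inner_P2, inner_P3] at h₁ h₂ h₃
  refine ⟨h₁, ?_, ?_⟩
  · rcases h₃ with ⟨_, _⟩ | ⟨_, _⟩
    · exact .inr ⟨by linarith, by linarith⟩
    · exact .inl ⟨by linarith, by linarith⟩
  · rcases h₂ with ⟨_, _⟩ | ⟨_, _⟩
    · exact .inl ⟨by linarith, by linarith⟩
    · exact .inr ⟨by linarith, by linarith⟩
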